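/- arXiv:2012.03558 — 4 statements merged into one kernel-verified Lean document; each statement's English description precedes it below -/
import Mathlib

section
/- There exist an infra-topological space (X, τ) and a subset A ⊆ X such that iInt(A) = A but A is not infra-open (equivalently, A is not i-genuine). -/
def IsInfraTop {X : Type*} (τ : Set (Set X)) : Prop :=
  ∅ ∈ τ ∧ Set.univ ∈ τ ∧ ∀ A B : Set X, A ∈ τ → B ∈ τ → A ∩ B ∈ τ

def iInt {X : Type*} (τ : Set (Set X)) (A : Set X) : Set X :=
  ⋃₀ {O | O ∈ τ ∧ O ⊆ A}

def IGenuine {X : Type*} (τ : Set (Set X)) (A : Set X) : Prop :=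
  iInt τ A ∈ τ

def InfraClosed {X : Type*} (τ : Set (Set X)) (C : Set X) : Prop :=
  Cᶜ ∈ τ

def iCl {X : Type*} (τ : Set (Set X)) (A : Set X) : Set X :=
  ⋂₀ {C | InfraClosed τ C ∧ A ⊆ C}

def CGenuine {X : Type*} (τ : Set (Set X)) (A : Set X) : Prop :=
  InfraClosed τ (iCl τ A)

/-! Two singletons {a} and {b} are infra-open, so {a, b} is its own infra-interior, but an
infra-topology need not be closed under unions: if a third point exists, {a, b} is not
infra-open. -/

open Set

section iInt

variable {X : Type*} {τ : Set (Set X)} {A O : Set X}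

theorem iInt_subset : iInt τ A ⊆ A :=
  sUnion_subset fun _ hO => hO.2

theorem subset_iInt (hO : O ∈ τ) (hOA : O ⊆ A) : O ⊆ iInt τ A :=
  subset_sUnion_of_mem ⟨hO, hOA⟩

theorem iGenuine_iff_mem_of_iInt_eq (h : iInt τ A = A) : IGenuine τ A ↔ A ∈ τ := by
  rw [IGenuine, h]

end iInt

section PairInfraTop

variable {X : Type*} {a b c : X}

def pairInfraTop (a b : X) : Set (Set X) :=
  {∅, univ, {a}, {b}}

theorem isInfraTop_pairInfraTop : IsInfraTop (pairInfraTop a b) := by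
  refine ⟨by simp [pairInfraTop], by simp [pairInfraTop], ?_⟩
  have singleton_inter : ({a} ∩ {b} : Set X) ∈ pairInfraTop a b := by
    by_cases hab : a = b
    · simp [pairInfraTop, hab]
    · exact Or.inl (singleton_inter_eq_empty.mpr hab)
  have singleton_inter' : ({b} ∩ {a} : Set X) ∈ pairInfraTop a b :=
    inter_comm ({a} : Set X) {b} ▸ singleton_inter
  rintro U V (rfl | rfl | rfl | rfl) (rfl | rfl | rfl | rfl) <;>
    simp_all [pairInfraTop]

theorem iInt_pairInfraTop : iInt (pairInfraTop a b) {a, b} = {a, b} := by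
  refine iInt_subset.antisymm ?_
  rw [insert_eq]
  exact union_subset (subset_iInt (by simp [pairInfraTop]) subset_union_left)
    (subset_iInt (by simp [pairInfraTop]) subset_union_right)

theorem pair_notMem_pairInfraTop (hab : a ≠ b) (hca : c ≠ a) (hcb : c ≠ b) :
    ({a, b} : Set X) ∉ pairInfraTop a b := by
  rintro (h | h | h | h)
  · exact (insert_nonempty a {b}).ne_empty h
  · exact hca ((eq_univ_iff_forall.mp h c).resolve_right hcb)
  · exact hab.symm (h.subset (by simp))
  · exact hab (h.subset (by simp))

end PairInfraTop

theorem stmt6 : ∃ (X : Type) (τ : Set (Set X)) (A : Set X),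
    IsInfraTop τ ∧ iInt τ A = A ∧ A ∉ τ ∧ ¬ IGenuine τ A := by
  have hA : ({0, 1} : Set (Fin 3)) ∉ pairInfraTop 0 1 :=
    pair_notMem_pairInfraTop (c := 2) (by decide) (by decide) (by decide)
  refine ⟨Fin 3, pairInfraTop 0 1, {0, 1}, isInfraTop_pairInfraTop, iInt_pairInfraTop, hA, ?_⟩
  rwa [iGenuine_iff_mem_of_iInt_eq iInt_pairInfraTop]
end

section
/- There exist an infra-topological space (X, τ) and non-i-genuine sets A, B ⊆ X such that A ∪ B is i-genuine. -/
/-!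
Take the infra-topology on `Fin 3` whose nonempty proper members are the singletons. Every set is
a union of singletons, so it is its own i-interior, and it is i-genuine exactly when it belongs to
the infra-topology. The two-point sets `{0, 1}` and `{1, 2}` do not, while their union is the
whole space.
-/

open Set

def singletonInfraTop (X : Type*) : Set (Set X) :=
  {∅, univ} ∪ range singleton

namespace singletonInfraTop

variable {X : Type*}

theorem mem_of_subset_singleton {A : Set X} {x : X} (h : A ⊆ {x}) :
    A ∈ singletonInfraTop X := by
  rcases subset_singleton_iff_eq.mp h with rfl | rfl
  · exact Or.inl (Or.inl rfl)
  · exact Or.inr ⟨x, rfl⟩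

theorem isInfraTop : IsInfraTop (singletonInfraTop X) := by
  refine ⟨Or.inl (Or.inl rfl), Or.inl (Or.inr rfl), fun A B hA hB => ?_⟩
  rcases hA with (rfl | rfl) | ⟨_, rfl⟩
  · rw [empty_inter]
    exact Or.inl (Or.inl rfl)
  · rwa [univ_inter]
  · exact mem_of_subset_singleton inter_subset_left

theorem iInt_eq (A : Set X) : iInt (singletonInfraTop X) A = A :=
  iInt_subset.antisymm fun _ hx =>
    subset_iInt (mem_of_subset_singleton subset_rfl) (singleton_subset_iff.mpr hx) rfl

theorem iGenuine_iff {A : Set X} :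
    IGenuine (singletonInfraTop X) A ↔ A ∈ singletonInfraTop X := by
  rw [IGenuine, iInt_eq]

theorem pair_not_mem {a b c : X} (hab : a ≠ b) (hc : c ∉ ({a, b} : Set X)) :
    ({a, b} : Set X) ∉ singletonInfraTop X := by
  rintro ((h | h) | ⟨x, h⟩)
  · exact (insert_nonempty a {b}).ne_empty h
  · exact hc (h ▸ mem_univ c)
  · have hsub : ({a, b} : Set X).Subsingleton := h ▸ subsingleton_singleton
    exact hab (hsub (mem_insert a {b}) (mem_insert_of_mem a rfl))

end singletonInfraTop

theorem stmt9 : ∃ (X : Type) (τ : Set (Set X)) (A B : Set X),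
    IsInfraTop τ ∧ ¬ IGenuine τ A ∧ ¬ IGenuine τ B ∧ IGenuine τ (A ∪ B) := by
  have hcover : ({0, 1} ∪ {1, 2} : Set (Fin 3)) = univ := by
    ext x
    fin_cases x <;> simp
  refine ⟨Fin 3, singletonInfraTop (Fin 3), {0, 1}, {1, 2}, singletonInfraTop.isInfraTop, ?_, ?_, ?_⟩
  · rw [singletonInfraTop.iGenuine_iff]
    exact singletonInfraTop.pair_not_mem (c := 2) (by decide) (by simp)
  · rw [singletonInfraTop.iGenuine_iff]
    exact singletonInfraTop.pair_not_mem (c := 0) (by decide) (by simp)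
  · rw [singletonInfraTop.iGenuine_iff, hcover]
    exact Or.inl (Or.inr rfl)
end

section
/- In an infra-topological space (X, τ), the family of ps-infra-open sets is a topology on X: it contains ∅ and X, is closed under binary intersections, and is closed under arbitrary unions. -/
/-! A set is ps-infra-open iff each of its points lies in a member of `τ` contained in it.
This local property passes to arbitrary unions, and, because `τ` is closed under binary
intersections, to binary intersections. -/

namespace InfraTop

variable {X : Type*} (τ : Set (Set X))

theorem mem_iInt_iff {A : Set X} {x : X} : x ∈ iInt τ A ↔ ∃ O ∈ τ, O ⊆ A ∧ x ∈ O := by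
  simp only [iInt, Set.mem_sUnion, Set.mem_ofPred_eq, and_assoc]

theorem iInt_subset (A : Set X) : iInt τ A ⊆ A := fun _ hx =>
  let ⟨_, _, hOA, hxO⟩ := (mem_iInt_iff τ).1 hx
  hOA hxO

theorem iInt_eq_self_iff {A : Set X} : iInt τ A = A ↔ ∀ x ∈ A, ∃ O ∈ τ, O ⊆ A ∧ x ∈ O := by
  rw [Set.Subset.antisymm_iff, and_iff_right (iInt_subset τ A)]
  simp only [Set.subset_def, mem_iInt_iff]

theorem iInt_empty : iInt τ (∅ : Set X) = ∅ :=
  Set.subset_empty_iff.1 (iInt_subset τ ∅)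

theorem iInt_univ (hu : Set.univ ∈ τ) : iInt τ (Set.univ : Set X) = Set.univ :=
  (iInt_eq_self_iff τ).2 fun _ _ => ⟨Set.univ, hu, subset_rfl, trivial⟩

theorem iInt_inter_eq_of_eq (hinter : ∀ O P : Set X, O ∈ τ → P ∈ τ → O ∩ P ∈ τ)
    {A B : Set X} (hA : iInt τ A = A) (hB : iInt τ B = B) : iInt τ (A ∩ B) = A ∩ B := by
  refine (iInt_eq_self_iff τ).2 fun x ⟨hxA, hxB⟩ => ?_
  obtain ⟨O, hO, hOA, hxO⟩ := (iInt_eq_self_iff τ).1 hA x hxA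
  obtain ⟨P, hP, hPB, hxP⟩ := (iInt_eq_self_iff τ).1 hB x hxB
  exact ⟨O ∩ P, hinter O P hO hP, Set.inter_subset_inter hOA hPB, hxO, hxP⟩

theorem iInt_sUnion_eq_of_eq {𝒜 : Set (Set X)} (h𝒜 : ∀ A ∈ 𝒜, iInt τ A = A) :
    iInt τ (⋃₀ 𝒜) = ⋃₀ 𝒜 := by
  refine (iInt_eq_self_iff τ).2 fun x ⟨A, hA𝒜, hxA⟩ => ?_
  obtain ⟨O, hO, hOA, hxO⟩ := (iInt_eq_self_iff τ).1 (h𝒜 A hA𝒜) x hxA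
  exact ⟨O, hO, hOA.trans (Set.subset_sUnion_of_mem hA𝒜), hxO⟩

end InfraTop

open InfraTop in
theorem stmt10 {X : Type*} (τ : Set (Set X)) (hτ : IsInfraTop τ) :
    iInt τ (∅ : Set X) = ∅ ∧ iInt τ (Set.univ : Set X) = Set.univ ∧
    (∀ A B : Set X, iInt τ A = A → iInt τ B = B → iInt τ (A ∩ B) = A ∩ B) ∧
    (∀ 𝒜 : Set (Set X), (∀ A ∈ 𝒜, iInt τ A = A) → iInt τ (⋃₀ 𝒜) = ⋃₀ 𝒜) := by
  obtain ⟨-, hu, hinter⟩ := hτ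
  exact ⟨iInt_empty τ, iInt_univ τ hu, fun _ _ => iInt_inter_eq_of_eq τ hinter,
    fun _ => iInt_sUnion_eq_of_eq τ⟩
end

section
/- In an infra-topological space (X, τ), for all A, B ⊆ X one has iCl(A ∪ B) = iCl(A) ∪ iCl(B). -/
/-! Complements turn binary intersections of open sets into binary unions of infra-closed sets,
so if `C ⊇ A` and `D ⊇ B` are infra-closed then so is `C ∪ D ⊇ A ∪ B`; hence a point outside
both `iCl A` and `iCl B` lies outside `iCl (A ∪ B)`. The reverse inclusion is monotonicity. -/

section InfraClosure

variable {X : Type*} {τ : Set (Set X)}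

theorem mem_iCl_iff {A : Set X} {x : X} :
    x ∈ iCl τ A ↔ ∀ C, InfraClosed τ C → A ⊆ C → x ∈ C := by
  simp only [iCl, Set.mem_sInter, Set.mem_ofPred_eq, and_imp]

theorem iCl_subset_of_infraClosed {A C : Set X} (hC : InfraClosed τ C) (hAC : A ⊆ C) :
    iCl τ A ⊆ C :=
  Set.sInter_subset_of_mem ⟨hC, hAC⟩

theorem iCl_mono {A B : Set X} (hAB : A ⊆ B) : iCl τ A ⊆ iCl τ B :=
  fun _ hx => mem_iCl_iff.2 fun C hC hBC => mem_iCl_iff.1 hx C hC (hAB.trans hBC)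

theorem InfraClosed.union (hτ : ∀ U V : Set X, U ∈ τ → V ∈ τ → U ∩ V ∈ τ) {C D : Set X}
    (hC : InfraClosed τ C) (hD : InfraClosed τ D) : InfraClosed τ (C ∪ D) := by
  rw [InfraClosed, Set.compl_union]
  exact hτ _ _ hC hD

theorem iCl_union_subset (hτ : ∀ U V : Set X, U ∈ τ → V ∈ τ → U ∩ V ∈ τ) (A B : Set X) :
    iCl τ (A ∪ B) ⊆ iCl τ A ∪ iCl τ B := by
  intro x hx
  by_contra hxAB
  obtain ⟨hxA, hxB⟩ := not_or.1 hxAB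
  obtain ⟨C, hC, hAC, hxC⟩ : ∃ C, InfraClosed τ C ∧ A ⊆ C ∧ x ∉ C := by
    simpa [mem_iCl_iff] using hxA
  obtain ⟨D, hD, hBD, hxD⟩ : ∃ D, InfraClosed τ D ∧ B ⊆ D ∧ x ∉ D := by
    simpa [mem_iCl_iff] using hxB
  have hxCD : x ∈ C ∪ D :=
    iCl_subset_of_infraClosed (hC.union hτ hD) (Set.union_subset_union hAC hBD) hx
  exact hxCD.elim hxC hxD

end InfraClosure

theorem stmt15 {X : Type*} (τ : Set (Set X)) (hτ : IsInfraTop τ)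
    (A B : Set X) : iCl τ (A ∪ B) = iCl τ A ∪ iCl τ B :=
  (iCl_union_subset hτ.2.2 A B).antisymm <|
    Set.union_subset (iCl_mono Set.subset_union_left) (iCl_mono Set.subset_union_right)
end
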